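/- Let l ≥ 1 be an integer, let μ ∈ (0,1), η > 0 and q ∈ (1,2), and define C(s) = ((sᵀs)^{1−1/q} − η)/((sᵀs)^{1−1/q} + η) for s ∈ ℝ^l. Let y, y^d, F, F̂, v : ℕ → ℝ^l be sequences, set e_k := y_k − y^d_k and s_k := e_{k+1} − e_k + μ·e_k. Suppose that the second-order ultra-local model y_{k+2} − 2y_{k+1} + y_k = F_k + v_k holds for all k, that v satisfies the control law v_k = y^d_{k+2} − 2y^d_{k+1} + y^d_k − (2η/((s_kᵀs_k)^{1−1/q} + η))·(e_{k+1} − e_k) + C(s_k)·μ·e_k − μ·e_{k+1} − F̂_k, and that F̂_k = F_k for all k. Then for every k ∈ ℕ: s_{k+1} = C(s_k)·s_k. -/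
import Mathlib


open scoped InnerProductSpace

/-- The control gain function C of Lemma 2. -/
noncomputable def Cfun (l : ℕ) (η q : ℝ) (s : EuclideanSpace ℝ (Fin l)) : ℝ :=
  (⟪s, s⟫_ℝ ^ (1 - 1 / q) - η) / (⟪s, s⟫_ℝ ^ (1 - 1 / q) + η)

/-- Corollary 3 (closed-loop identity, ν = 2): with an exact ultra-local-model estimate,
the second-order model-free control law (eq. (58)) yields s_{k+1} = C(s_k) s_k. -/
theorem stmt_17 (l : ℕ) (hl : 1 ≤ l) (μ η q : ℝ)
    (hμ : μ ∈ Set.Ioo (0:ℝ) 1) (hη : 0 < η) (hq : q ∈ Set.Ioo (1:ℝ) 2)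
    (y yd F Fhat v : ℕ → EuclideanSpace ℝ (Fin l))
    (e : ℕ → EuclideanSpace ℝ (Fin l)) (he : ∀ k, e k = y k - yd k)
    (s : ℕ → EuclideanSpace ℝ (Fin l)) (hs : ∀ k, s k = e (k + 1) - e k + μ • e k)
    (hulm : ∀ k, y (k + 2) - (2:ℝ) • y (k + 1) + y k = F k + v k)
    (hctrl : ∀ k, v k = yd (k + 2) - (2:ℝ) • yd (k + 1) + yd k
      - (2 * η / (⟪s k, s k⟫_ℝ ^ (1 - 1 / q) + η)) • (e (k + 1) - e k)
      + (Cfun l η q (s k) * μ) • e k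
      - μ • e (k + 1)
      - Fhat k)
    (hexact : ∀ k, Fhat k = F k) :
    ∀ k, s (k + 1) = Cfun l η q (s k) • s k := by
  intro k
  have hN : (0:ℝ) ≤ ⟪s k, s k⟫_ℝ ^ (1 - 1 / q) :=
    Real.rpow_nonneg real_inner_self_nonneg _
  have hC : Cfun l η q (s k) = 1 - 2 * η / (⟪s k, s k⟫_ℝ ^ (1 - 1 / q) + η) := by
    unfold Cfun
    set N := ⟪s k, s k⟫_ℝ ^ (1 - 1 / q) with hNdef
    have hD : N + η ≠ 0 := by positivity
    field_simp
    ring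
  have h1 := hulm k
  have h2 := hctrl k
  rw [hexact] at h2
  rw [h2] at h1
  rw [hC] at h1 ⊢
  rw [hs (k+1)]
  rw [hs k] at h1 ⊢
  simp only [he] at h1 ⊢
  linear_combination (norm := module) h1
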